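/- Fix an integer N ≥ 3 and parameters λ_1, λ_2, … in [0,1]. Let ρ_1 = |GHZ_N⟩⟨GHZ_N| and ρ_k = (id ⊗ Φ_{λ_{k−1}})(ρ_{k−1}) for k ≥ 2 (the map acting on the N-th qubit). Then for every k ≥ 1, Tr(W^{λ_k} ρ_k) = 1 − ∏_{j=1}^{k−1} (1+√(1−λ_j²))/2 − λ_k/2^{k−1}. Consequently, the k-th sequential observer detects genuine multipartite entanglement, i.e., Tr(W^{λ_k} ρ_k) < 0, if and only if λ_k > 2^{k−1}·[1 − ∏_{j=1}^{k−1} (1+√(1−λ_j²))/2], a condition independent of N. -/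

import Mathlib

open Matrix
open scoped ComplexOrder

noncomputable section

/-- The space of operators on `N` qubits: complex `2^N × 2^N` matrices, with the
`N`-fold tensor-product structure made explicit by indexing rows and columns by
functions `Fin N → Fin 2`. -/
abbrev QM (N : ℕ) := Matrix (Fin N → Fin 2) (Fin N → Fin 2) ℂ

/-- The Pauli matrix σ_x. -/
def sigx : Matrix (Fin 2) (Fin 2) ℂ := !![0, 1; 1, 0]

/-- The Pauli matrix σ_z. -/
def sigz : Matrix (Fin 2) (Fin 2) ℂ := !![1, 0; 0, -1]

/-- The tensor (Kronecker) product `f 0 ⊗ f 1 ⊗ ⋯ ⊗ f (N-1)` of single-qubit operators. -/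
def tensorAll (N : ℕ) (f : Fin N → Matrix (Fin 2) (Fin 2) ℂ) : QM N :=
  Matrix.of fun v w => ∏ i, f i (v i) (w i)

/-- The single-qubit operator `M` acting on qubit `m`, tensored with the identity
on all other qubits. -/
def site (N : ℕ) (m : Fin N) (M : Matrix (Fin 2) (Fin 2) ℂ) : QM N :=
  tensorAll N (fun i => if i = m then M else 1)

/-- GHZ stabilizer generator `S_1 = σ_x^(1) σ_x^(2) ⋯ σ_x^(N)`. -/
def ghzS1 (N : ℕ) : QM N := tensorAll N (fun _ => sigx)

/-- GHZ stabilizer generator with σ_z on qubits `m-1` and `m` (0-based `m : Fin N`,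
`m ≠ 0`); it represents the 1-based generator `S_{m+1} = σ_z^{(m)} σ_z^{(m+1)}`. -/
def ghzSz (N : ℕ) (m : Fin N) : QM N :=
  tensorAll N (fun i => if i.val = m.val - 1 ∨ i = m then sigz else 1)

/-- The product `∏_{m=2}^{N} (I + S_m)/2` appearing in the GHZ witness
(the factors pairwise commute, so the list ordering is immaterial). -/
def ghzProd (N : ℕ) : QM N :=
  (((List.finRange N).filter (fun m => m.val ≠ 0)).map
    (fun m => (1/2 : ℂ) • ((1 : QM N) + ghzSz N m))).prod

/-- The GHZ genuine-multipartite-entanglement witness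
`W = 3 I − 2 [ (I + S_1)/2 + ∏_{m=2}^N (I + S_m)/2 ]`. -/
def ghzWitness (N : ℕ) : QM N :=
  (3 : ℂ) • (1 : QM N) -
    (2 : ℂ) • ((1/2 : ℂ) • ((1 : QM N) + ghzS1 N) + ghzProd N)

/-- The modified (unsharp) GHZ witness
`W^λ = 3 I − 2 [ (I + λ S_1)/2 + ∏_{m=2}^N (I + S_m)/2 ]`. -/
def ghzWitnessMod (N : ℕ) (lam : ℝ) : QM N :=
  (3 : ℂ) • (1 : QM N) -
    (2 : ℂ) • ((1/2 : ℂ) • ((1 : QM N) + (lam : ℂ) • ghzS1 N) + ghzProd N)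

/-- The `N`-qubit GHZ state vector `(|0⟩^{⊗N} + |1⟩^{⊗N})/√2`. -/
def ghzVec (N : ℕ) : (Fin N → Fin 2) → ℂ := fun v =>
  if ∀ i, v i = 0 then ((1 / Real.sqrt 2 : ℝ) : ℂ)
  else if ∀ i, v i = 1 then ((1 / Real.sqrt 2 : ℝ) : ℂ) else 0

/-- The rank-one projector `|ψ⟩⟨ψ|` onto a vector `ψ`. -/
def outer (N : ℕ) (ψ : (Fin N → Fin 2) → ℂ) : QM N :=
  Matrix.vecMulVec ψ (star ψ)

/-- The single-qubit unsharp-measurement channel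
`Φ_λ(ρ) = ((2+√(1−λ²))/4)ρ + (1/4)σ_z ρ σ_z + ((1−√(1−λ²))/4)σ_x ρ σ_x`, applied to
qubit `m` of an `N`-qubit operator (and acting as the identity on the other qubits). -/
def phiMap (N : ℕ) (m : Fin N) (lam : ℝ) (ρ : QM N) : QM N :=
  (((2 + Real.sqrt (1 - lam ^ 2)) / 4 : ℝ) : ℂ) • ρ
    + (1/4 : ℂ) • (site N m sigz * ρ * site N m sigz)
    + (((1 - Real.sqrt (1 - lam ^ 2)) / 4 : ℝ) : ℂ) • (site N m sigx * ρ * site N m sigx)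


/-!
Write `W^λ = 2 - 2P - λ S₁`, where `P = ∏ (I + S_m)/2` is the diagonal projector onto
`span {|0…0⟩, |1…1⟩}`. Dually, `Φ_λ` on qubit `N` maps an observable `A` to
`((2+s)/4) A + (1/4) σ_z A σ_z + ((1-s)/4) σ_x A σ_x` with `s = √(1-λ²)`. As `σ_z` anticommutes
and `σ_x` commutes with `S₁`, this halves `S₁`. A diagonal observable commutes with `σ_z`,
and conjugation by `σ_x` flips the last bit of its index, so the parts of `2 - 2P` that are even
and odd under that flip are multiplied by `1` and `(1+s)/2` respectively. In the GHZ state the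
three observables `S₁`, even part and odd part have expectations `1`, `1` and `-1`.
-/

open Finset

section Tensor

variable {N : ℕ}

lemma tensorAll_mul (f g : Fin N → Matrix (Fin 2) (Fin 2) ℂ) :
    tensorAll N f * tensorAll N g = tensorAll N (fun i => f i * g i) := by
  ext v w
  simp only [tensorAll, of_apply, mul_apply, prod_univ_sum, Fintype.piFinset_univ,
    prod_mul_distrib]

lemma tensorAll_diagonal (d : Fin N → Fin 2 → ℂ) :
    tensorAll N (fun i => diagonal (d i)) = diagonal (fun v => ∏ i, d i (v i)) := by
  ext v w
  by_cases h : v = w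
  · subst h
    simp [tensorAll]
  · obtain ⟨i, hi⟩ := Function.ne_iff.mp h
    rw [diagonal_apply_ne _ h, tensorAll, of_apply]
    exact prod_eq_zero (mem_univ i) (diagonal_apply_ne _ hi)

lemma tensorAll_addRight (c : Fin N → Fin 2) :
    tensorAll N (fun i => (Equiv.addRight (c i)).toPEquiv.toMatrix)
      = (Equiv.addRight c).toPEquiv.toMatrix := by
  ext v w
  simp [tensorAll, PEquiv.toMatrix_apply, Fintype.prod_boole, funext_iff, eq_comm]

lemma tensorAll_ite_smul (f : Fin N → Matrix (Fin 2) (Fin 2) ℂ) (m : Fin N) (c : ℂ) :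
    tensorAll N (fun i => if i = m then c • f i else f i) = c • tensorAll N f := by
  ext v w
  have hfactor : ∀ i, (if i = m then c • f i else f i) (v i) (w i)
      = (if i = m then c else 1) * f i (v i) (w i) := by
    intro i; split_ifs <;> simp
  simp only [tensorAll, of_apply, Matrix.smul_apply, smul_eq_mul, hfactor, prod_mul_distrib,
    prod_ite_eq', mem_univ, if_true]

lemma site_mul_tensorAll_mul_site (m : Fin N) (A B : Matrix (Fin 2) (Fin 2) ℂ)
    (f : Fin N → Matrix (Fin 2) (Fin 2) ℂ) :
    site N m A * tensorAll N f * site N m B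
      = tensorAll N (fun i => if i = m then A * f i * B else f i) := by
  rw [site, site, tensorAll_mul, tensorAll_mul]
  congr 1
  funext i
  split_ifs <;> simp

end Tensor

lemma sigz_eq_diagonal : sigz = diagonal ![1, -1] := by
  ext a b; fin_cases a <;> fin_cases b <;> simp [sigz]

lemma sigx_eq_toMatrix : sigx = (Equiv.addRight (1 : Fin 2)).toPEquiv.toMatrix := by
  ext a b; fin_cases a <;> fin_cases b <;> simp [sigx, PEquiv.toMatrix_apply]

lemma sigz_mul_sigx_mul_sigz : sigz * sigx * sigz = (-1 : ℂ) • sigx := by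
  ext a b; fin_cases a <;> fin_cases b <;> simp [sigz, sigx]

lemma sigx_mul_sigx_mul_sigx : sigx * sigx * sigx = sigx := by
  ext a b; fin_cases a <;> fin_cases b <;> simp [sigx]

section Site

variable {N : ℕ} (m : Fin N)

def flipBit : Equiv.Perm (Fin N → Fin 2) := Equiv.addRight (Pi.single m 1)

lemma flipBit_symm : (flipBit m).symm = flipBit m := by
  rw [flipBit, Equiv.addRight_symm, ← Pi.single_neg]
  rfl

lemma flipBit_flipBit (v : Fin N → Fin 2) : flipBit m (flipBit m v) = v := by
  simpa [flipBit_symm] using (flipBit m).symm_apply_apply v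

lemma site_sigz_eq_diagonal : site N m sigz = diagonal (fun v => ![1, -1] (v m)) := by
  have hfactor : (fun i => if i = m then sigz else 1)
      = fun i => diagonal (fun a => if i = m then ![1, -1] a else 1) := by
    funext i; split_ifs <;> simp [sigz_eq_diagonal]
  rw [site, hfactor, tensorAll_diagonal]
  simp only [prod_ite_eq', mem_univ, if_true]

lemma site_sigx_eq_toMatrix : site N m sigx = (flipBit m).toPEquiv.toMatrix := by
  have hfactor : (fun i => if i = m then sigx else 1)
      = fun i => ((Equiv.addRight ((Pi.single m 1 : Fin N → Fin 2) i)).toPEquiv.toMatrix :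
        Matrix (Fin 2) (Fin 2) ℂ) := by
    funext i; by_cases h : i = m
    · subst h; simp [sigx_eq_toMatrix]
    · simp [h]
  rw [site, hfactor, tensorAll_addRight, flipBit]

lemma site_sigz_mul_diagonal_mul_site_sigz (d : (Fin N → Fin 2) → ℂ) :
    site N m sigz * diagonal d * site N m sigz = diagonal d := by
  rw [site_sigz_eq_diagonal, diagonal_mul_diagonal, diagonal_mul_diagonal]
  congr 1
  funext v
  have hsq : ![(1 : ℂ), -1] (v m) * ![1, -1] (v m) = 1 := by
    rcases Fin.exists_fin_two.mp ⟨v m, rfl⟩ with h | h <;> simp [h]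
  linear_combination d v * hsq

lemma site_sigx_mul_diagonal_mul_site_sigx (d : (Fin N → Fin 2) → ℂ) :
    site N m sigx * diagonal d * site N m sigx = diagonal (d ∘ flipBit m) := by
  rw [site_sigx_eq_toMatrix, PEquiv.toMatrix_toPEquiv_mul, PEquiv.mul_toMatrix_toPEquiv,
    flipBit_symm, submatrix_submatrix, Function.comp_id, Function.id_comp,
    submatrix_diagonal_equiv]

end Site

section Channel

variable {N : ℕ} (m : Fin N) (lam : ℝ)

lemma trace_mul_phiMap (A ρ : QM N) :
    (A * phiMap N m lam ρ).trace
      = (((2 + Real.sqrt (1 - lam ^ 2)) / 4 : ℝ) : ℂ) * (A * ρ).trace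
        + (1/4 : ℂ) * (site N m sigz * A * site N m sigz * ρ).trace
        + (((1 - Real.sqrt (1 - lam ^ 2)) / 4 : ℝ) : ℂ)
            * (site N m sigx * A * site N m sigx * ρ).trace := by
  simp only [phiMap, Matrix.mul_add, Matrix.mul_smul, trace_add, trace_smul, smul_eq_mul,
    ← Matrix.mul_assoc]
  rw [trace_mul_cycle (A * site N m sigz), trace_mul_cycle (A * site N m sigx)]
  simp only [← Matrix.mul_assoc]

lemma trace_mul_phiMap_of_conj (A ρ : QM N) (εz εx : ℂ)
    (hz : site N m sigz * A * site N m sigz = εz • A)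
    (hx : site N m sigx * A * site N m sigx = εx • A) :
    (A * phiMap N m lam ρ).trace
      = ((2 + Real.sqrt (1 - lam ^ 2)) / 4 + εz / 4 + εx * ((1 - Real.sqrt (1 - lam ^ 2)) / 4))
        * (A * ρ).trace := by
  rw [trace_mul_phiMap, hz, hx, Matrix.smul_mul, Matrix.smul_mul, trace_smul, trace_smul,
    smul_eq_mul, smul_eq_mul]
  push_cast
  ring

lemma trace_ghzS1_mul_phiMap (ρ : QM N) :
    (ghzS1 N * phiMap N m lam ρ).trace = 1 / 2 * (ghzS1 N * ρ).trace := by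
  rw [trace_mul_phiMap_of_conj m lam _ _ (-1) 1]
  · ring_nf
  · rw [ghzS1, site_mul_tensorAll_mul_site, sigz_mul_sigx_mul_sigz, tensorAll_ite_smul]
  · rw [ghzS1, site_mul_tensorAll_mul_site, sigx_mul_sigx_mul_sigx]
    simp only [ite_self, one_smul]

lemma trace_diagonal_mul_phiMap_of_comp_flipBit_eq (d : (Fin N → Fin 2) → ℂ) (ρ : QM N)
    (hd : d ∘ flipBit m = d) :
    (diagonal d * phiMap N m lam ρ).trace = (diagonal d * ρ).trace := by
  rw [trace_mul_phiMap_of_conj m lam _ _ 1 1]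
  · ring_nf
  · rw [site_sigz_mul_diagonal_mul_site_sigz, one_smul]
  · rw [site_sigx_mul_diagonal_mul_site_sigx, hd, one_smul]

lemma trace_diagonal_mul_phiMap_of_comp_flipBit_eq_neg (d : (Fin N → Fin 2) → ℂ) (ρ : QM N)
    (hd : d ∘ flipBit m = -d) :
    (diagonal d * phiMap N m lam ρ).trace
      = (((1 + Real.sqrt (1 - lam ^ 2)) / 2 : ℝ) : ℂ) * (diagonal d * ρ).trace := by
  rw [trace_mul_phiMap_of_conj m lam _ _ 1 (-1)]
  · push_cast; ring_nf
  · rw [site_sigz_mul_diagonal_mul_site_sigz, one_smul]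
  · rw [site_sigx_mul_diagonal_mul_site_sigx, hd, neg_one_smul, diagonal_neg]
    rfl

end Channel

section GHZ

variable {N : ℕ}

lemma ghzS1_eq_toMatrix :
    ghzS1 N = (Equiv.addRight (fun _ : Fin N => (1 : Fin 2))).toPEquiv.toMatrix := by
  rw [ghzS1, ← tensorAll_addRight, sigx_eq_toMatrix]

lemma ghzVec_comp_addRight_one : ghzVec N ∘ Equiv.addRight (fun _ => 1) = ghzVec N := by
  funext v
  have hbit : ∀ a : Fin 2, (a + 1 = 0 ↔ a = 1) ∧ (a + 1 = 1 ↔ a = 0) := by decide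
  simp only [ghzVec, Function.comp_apply, Equiv.coe_addRight, Pi.add_apply, hbit]
  split_ifs <;> rfl

lemma ghzS1_mul_outer_ghzVec : ghzS1 N * outer N (ghzVec N) = outer N (ghzVec N) := by
  rw [outer, mul_vecMulVec, ghzS1_eq_toMatrix, PEquiv.toMatrix_toPEquiv_mulVec,
    ghzVec_comp_addRight_one]

lemma ghzVec_const (hN : 0 < N) (c : Fin 2) :
    ghzVec N (fun _ => c) = ((1 / Real.sqrt 2 : ℝ) : ℂ) := by
  have : Nonempty (Fin N) := ⟨⟨0, hN⟩⟩
  fin_cases c <;> simp [ghzVec]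

lemma ghzVec_eq_zero {v : Fin N → Fin 2} (h0 : v ≠ fun _ => 0) (h1 : v ≠ fun _ => 1) :
    ghzVec N v = 0 := by
  rw [ghzVec, if_neg (fun h => h0 (funext h)), if_neg (fun h => h1 (funext h))]

lemma trace_diagonal_mul_outer_ghzVec (hN : 0 < N) (d : (Fin N → Fin 2) → ℂ) :
    (diagonal d * outer N (ghzVec N)).trace = (d (fun _ => 0) + d (fun _ => 1)) / 2 := by
  have hne : (fun _ : Fin N => (0 : Fin 2)) ≠ fun _ => 1 :=
    fun h => absurd (congrFun h ⟨0, hN⟩) (by decide)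
  have hsupp : ∀ v ∈ univ, v ∉ ({fun _ => 0, fun _ => 1} : Finset _) →
      d v * (ghzVec N v * star (ghzVec N v)) = 0 := by
    intro v _ hv
    simp only [mem_insert, mem_singleton, not_or] at hv
    rw [ghzVec_eq_zero hv.1 hv.2, zero_mul, mul_zero]
  have hnorm : ((1 / Real.sqrt 2 : ℝ) : ℂ) * star ((1 / Real.sqrt 2 : ℝ) : ℂ) = 1 / 2 := by
    rw [Complex.star_def, Complex.conj_ofReal, ← Complex.ofReal_mul, div_mul_div_comm,
      Real.mul_self_sqrt zero_le_two]
    norm_num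
  simp only [outer, trace, Matrix.diag, diagonal_mul, vecMulVec_apply, Pi.star_apply]
  rw [← sum_subset (subset_univ _) hsupp, sum_pair hne, ghzVec_const hN, ghzVec_const hN, hnorm]
  ring

lemma trace_outer_ghzVec (hN : 0 < N) : (outer N (ghzVec N)).trace = 1 := by
  simpa [diagonal_one] using trace_diagonal_mul_outer_ghzVec hN 1

end GHZ

section Stabilizer

variable {N : ℕ}

def constIndicator (N : ℕ) (v : Fin N → Fin 2) : ℂ := if ∀ i j, v i = v j then 1 else 0

lemma ghzSz_eq_site_mul_site (m : Fin N) (hm : m.val ≠ 0) :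
    ghzSz N m = site N ⟨m - 1, by omega⟩ sigz * site N m sigz := by
  rw [ghzSz, site, site, tensorAll_mul]
  congr 1
  funext i
  by_cases hi : i = m
  · subst hi; simp only [or_true, ↓reduceIte, Fin.ext_iff, ite_mul, one_mul, right_eq_ite_iff]
    omega
  · by_cases hp : i.val = m.val - 1 <;> simp [hi, hp, Fin.ext_iff]

lemma half_smul_one_add_ghzSz (m : Fin N) (hm : m.val ≠ 0) :
    (1 / 2 : ℂ) • (1 + ghzSz N m)
      = diagonal (fun v => if v ⟨m - 1, by omega⟩ = v m then 1 else 0) := by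
  rw [ghzSz_eq_site_mul_site m hm, site_sigz_eq_diagonal, site_sigz_eq_diagonal,
    diagonal_mul_diagonal, ← diagonal_one, diagonal_add, ← diagonal_smul]
  congr 1
  funext v
  rcases Fin.exists_fin_two.mp ⟨v ⟨m - 1, by omega⟩, rfl⟩ with h | h <;>
    rcases Fin.exists_fin_two.mp ⟨v m, rfl⟩ with h' | h' <;> norm_num [h, h']

lemma forall_eq_of_forall_prev_eq (v : Fin N → Fin 2)
    (h : ∀ m : Fin N, m.val ≠ 0 → v ⟨m - 1, by omega⟩ = v m) (i j : Fin N) : v i = v j := by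
  have hzero : ∀ n (hn : n < N), v ⟨n, hn⟩ = v ⟨0, by omega⟩ := by
    intro n
    induction n with
    | zero => intro _; rfl
    | succ n ih => intro hn; rw [← h ⟨n + 1, hn⟩ n.succ_ne_zero]; exact ih (by omega)
  rw [hzero i i.isLt, hzero j j.isLt]

lemma list_prod_map_diagonal {ι n α : Type*} [Fintype n] [DecidableEq n] [CommSemiring α]
    (l : List ι) (g : ι → n → α) :
    (l.map fun a => diagonal (g a)).prod = diagonal (fun v => (l.map fun a => g a v).prod) := by
  induction l with
  | nil => simp
  | cons a l ih => simp [ih, diagonal_mul_diagonal]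

lemma ghzProd_eq_diagonal : ghzProd N = diagonal (constIndicator N) := by
  rw [ghzProd, List.map_congr_left fun m hm =>
    half_smul_one_add_ghzSz m (by simpa using (List.mem_filter.mp hm).2)]
  rw [list_prod_map_diagonal]
  congr 1
  funext v
  rw [← List.prod_toFinset _ ((List.nodup_finRange N).filter _), prod_boole, constIndicator]
  congr 1
  simp only [List.mem_toFinset, List.mem_filter, List.mem_finRange, true_and, ne_eq,
    decide_not, Bool.not_eq_eq_eq_not, Bool.not_true, decide_eq_false_iff_not]
  exact propext ⟨forall_eq_of_forall_prev_eq v, fun h m _ => h _ _⟩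

lemma constIndicator_const (N : ℕ) (c : Fin 2) : constIndicator N (fun _ => c) = 1 :=
  if_pos fun _ _ => rfl

lemma constIndicator_flipBit_const (hN : 2 ≤ N) (m : Fin N) (c : Fin 2) :
    constIndicator N (flipBit m (fun _ => c)) = 0 := by
  have : Nontrivial (Fin N) := Fin.nontrivial_iff_two_le.mpr hN
  obtain ⟨j, hj⟩ := exists_ne m
  refine if_neg fun h => absurd (h m j) ?_
  fin_cases c <;> simp [flipBit, hj]

lemma ghzWitnessMod_eq (lam : ℝ) (m : Fin N) :
    ghzWitnessMod N lam
      = diagonal (fun v => 2 - constIndicator N v - constIndicator N (flipBit m v))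
        + diagonal (fun v => constIndicator N (flipBit m v) - constIndicator N v)
        - (lam : ℂ) • ghzS1 N := by
  rw [ghzWitnessMod, ghzProd_eq_diagonal, ← diagonal_one]
  ext v w
  by_cases h : v = w
  · subst h
    simp only [Matrix.sub_apply, Matrix.add_apply, Matrix.smul_apply, diagonal_apply_eq,
      smul_eq_mul]
    ring
  · simp [h]

end Stabilizer

lemma eq_prod_Icc_mul_of_succ_eq_mul {M : Type*} [CommMonoid M] {f c : ℕ → M}
    (h : ∀ k, 1 ≤ k → f (k + 1) = c k * f k) {k : ℕ} (hk : 1 ≤ k) :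
    f k = (∏ j ∈ Icc 1 (k - 1), c j) * f 1 := by
  induction k, hk using Nat.le_induction with
  | base => simp
  | succ k hk ih =>
    obtain ⟨n, rfl⟩ : ∃ n, k = n + 1 := ⟨k - 1, by omega⟩
    rw [h _ hk, ih, Nat.add_sub_cancel, Nat.add_sub_cancel, prod_Icc_succ_top (by omega)]
    ac_rfl

section Sequential

variable {N : ℕ} (m : Fin N) {lam : ℕ → ℝ} {ρ : ℕ → QM N}
  (hrec : ∀ k, 1 ≤ k → ρ (k + 1) = phiMap N m (lam k) (ρ k))
include hrec

lemma trace_ghzS1_mul_iterate {k : ℕ} (hk : 1 ≤ k) :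
    (ghzS1 N * ρ k).trace = (1 / 2) ^ (k - 1) * (ghzS1 N * ρ 1).trace := by
  rw [eq_prod_Icc_mul_of_succ_eq_mul (f := fun k => (ghzS1 N * ρ k).trace)
    (fun j hj => by rw [hrec j hj, trace_ghzS1_mul_phiMap]) hk, prod_const, Nat.card_Icc,
    Nat.add_sub_cancel]

lemma trace_diagonal_mul_iterate_of_even {d : (Fin N → Fin 2) → ℂ} (hd : d ∘ flipBit m = d)
    {k : ℕ} (hk : 1 ≤ k) :
    (diagonal d * ρ k).trace = (diagonal d * ρ 1).trace := by
  rw [eq_prod_Icc_mul_of_succ_eq_mul (f := fun k => (diagonal d * ρ k).trace) (c := fun _ => 1)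
    (fun j hj => by rw [hrec j hj, trace_diagonal_mul_phiMap_of_comp_flipBit_eq m _ _ _ hd,
      one_mul]) hk, prod_const_one, one_mul]

lemma trace_diagonal_mul_iterate_of_odd {d : (Fin N → Fin 2) → ℂ} (hd : d ∘ flipBit m = -d)
    {k : ℕ} (hk : 1 ≤ k) :
    (diagonal d * ρ k).trace
      = ((∏ j ∈ Icc 1 (k - 1), (1 + Real.sqrt (1 - lam j ^ 2)) / 2 : ℝ) : ℂ)
        * (diagonal d * ρ 1).trace := by
  rw [eq_prod_Icc_mul_of_succ_eq_mul (f := fun k => (diagonal d * ρ k).trace)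
    (fun j hj => by rw [hrec j hj, trace_diagonal_mul_phiMap_of_comp_flipBit_eq_neg m _ _ _ hd])
    hk, Complex.ofReal_prod]

end Sequential

/-- Fix an integer `N ≥ 3` and parameters `λ_1, λ_2, …` in `[0,1]`.
Let `ρ_1 = |GHZ_N⟩⟨GHZ_N|` and `ρ_k = (id ⊗ Φ_{λ_{k−1}})(ρ_{k−1})` for `k ≥ 2` (the map
acting on the `N`-th qubit). Then for every `k ≥ 1`,
`Tr(W^{λ_k} ρ_k) = 1 − ∏_{j=1}^{k−1} (1+√(1−λ_j²))/2 − λ_k/2^{k−1}`.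
Consequently, the `k`-th sequential observer detects genuine multipartite entanglement,
i.e. `Tr(W^{λ_k} ρ_k) < 0`, if and only if
`λ_k > 2^{k−1}·[1 − ∏_{j=1}^{k−1} (1+√(1−λ_j²))/2]`, a condition independent of `N`. -/
theorem ghz_sequential_witness_trace
    (N : ℕ) (hN : 3 ≤ N)
    (lam : ℕ → ℝ)
    (ρ : ℕ → QM N)
    (hinit : ρ 1 = outer N (ghzVec N))
    (hrec : ∀ k, 1 ≤ k → ρ (k + 1) = phiMap N ⟨N - 1, by omega⟩ (lam k) (ρ k)) :
    ∀ k, 1 ≤ k →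
      (ghzWitnessMod N (lam k) * ρ k).trace
        = ((1 - ∏ j ∈ Finset.Icc 1 (k - 1), (1 + Real.sqrt (1 - lam j ^ 2)) / 2
            - lam k / 2 ^ (k - 1) : ℝ) : ℂ) ∧
      (((ghzWitnessMod N (lam k) * ρ k).trace).re < 0 ↔
        lam k > (2 : ℝ) ^ (k - 1)
          * (1 - ∏ j ∈ Finset.Icc 1 (k - 1), (1 + Real.sqrt (1 - lam j ^ 2)) / 2)) := by
  intro k hk
  set L : Fin N := ⟨N - 1, by omega⟩
  have hS := trace_ghzS1_mul_iterate L hrec hk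
  have hEven := trace_diagonal_mul_iterate_of_even L hrec
    (d := fun v => 2 - constIndicator N v - constIndicator N (flipBit L v))
    (funext fun v => by simp only [Function.comp_apply, flipBit_flipBit]; ring) hk
  have hOdd := trace_diagonal_mul_iterate_of_odd L hrec
    (d := fun v => constIndicator N (flipBit L v) - constIndicator N v)
    (funext fun v => by simp only [Function.comp_apply, Pi.neg_apply, flipBit_flipBit]; ring) hk
  simp only [hinit, ghzS1_mul_outer_ghzVec, trace_outer_ghzVec (by omega : 0 < N),
    trace_diagonal_mul_outer_ghzVec (by omega : 0 < N),
    constIndicator_const, constIndicator_flipBit_const (by omega : 2 ≤ N)] at hS hEven hOdd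
  set π := ∏ j ∈ Finset.Icc 1 (k - 1), (1 + Real.sqrt (1 - lam j ^ 2)) / 2
  have htrace :
      (ghzWitnessMod N (lam k) * ρ k).trace = ((1 - π - lam k / 2 ^ (k - 1) : ℝ) : ℂ) := by
    rw [ghzWitnessMod_eq _ L, Matrix.sub_mul, Matrix.add_mul, trace_sub, trace_add, smul_mul,
      trace_smul, hS, hEven, hOdd]
    simp only [Complex.ofReal_sub, Complex.ofReal_one, Complex.ofReal_div, Complex.ofReal_pow,
      Complex.ofReal_ofNat, smul_eq_mul, one_div, inv_pow]
    ring
  refine ⟨htrace, ?_⟩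
  rw [htrace, Complex.ofReal_re, sub_neg, lt_div_iff₀ (by positivity), mul_comm]

end
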